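/- Deterministic core of the different-matrices desynchronization lemma: Let d ≥ 1, let R₁, R₂ be real d×d matrices, let x, y ∈ ℝ^d, and let α_I, δ_I, δ_D ≥ 0 and α_D ≥ 0. If ‖R₁x‖² ≤ (α_I + δ_I)‖x‖², |⟨R₂y, R₁x⟩ − α_D⟨y, R₁x⟩| ≤ δ_D‖R₁x‖‖y‖, and |⟨R₁x, y⟩ − α_D⟨x, y⟩| ≤ δ_D‖x‖‖y‖, then |⟨R₁x, R₂y⟩ − α_D²⟨x, y⟩| ≤ (δ_D·√(α_I + δ_I) + α_D·δ_D)·‖x‖‖y‖. -/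

import Mathlib

/-! Writing `⟨R₁x, R₂y⟩ − α²⟨x, y⟩ = (⟨R₂y, R₁x⟩ − α⟨y, R₁x⟩) + α(⟨R₁x, y⟩ − α⟨x, y⟩)`,
the first bracket is controlled by desynchronization of `R₂` against the vector `R₁x`,
whose norm is at most `√(α_I + δ_I)‖x‖` by the isometry bound, and the second bracket by
desynchronization of `R₁` against `y`. -/

def ip {d : ℕ} (v w : Fin d → ℝ) : ℝ := ∑ i, v i * w i

def sqNorm {d : ℕ} (v : Fin d → ℝ) : ℝ := ∑ i, v i ^ 2

noncomputable def l2 {d : ℕ} (v : Fin d → ℝ) : ℝ := Real.sqrt (∑ i, v i ^ 2)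

lemma abs_sub_sq_mul_le_of_abs_sub_mul_le {a b c α ε₁ ε₂ : ℝ} (hα : 0 ≤ α)
    (h₁ : |a - α * b| ≤ ε₁) (h₂ : |b - α * c| ≤ ε₂) :
    |a - α ^ 2 * c| ≤ ε₁ + α * ε₂ :=
  calc |a - α ^ 2 * c| = |(a - α * b) + α * (b - α * c)| := by ring_nf
    _ ≤ |a - α * b| + |α * (b - α * c)| := abs_add_le _ _
    _ = |a - α * b| + α * |b - α * c| := by rw [abs_mul, abs_of_nonneg hα]
    _ ≤ ε₁ + α * ε₂ := by gcongr

section Euclidean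

variable {d : ℕ}

lemma ip_comm (v w : Fin d → ℝ) : ip v w = ip w v := by
  simp only [ip, mul_comm]

lemma sqNorm_nonneg (v : Fin d → ℝ) : 0 ≤ sqNorm v :=
  Finset.sum_nonneg fun i _ => sq_nonneg (v i)

lemma l2_eq_sqrt_sqNorm (v : Fin d → ℝ) : l2 v = Real.sqrt (sqNorm v) := rfl

lemma l2_nonneg (v : Fin d → ℝ) : 0 ≤ l2 v := Real.sqrt_nonneg _

lemma l2_le_sqrt_mul_l2_of_sqNorm_le {v w : Fin d → ℝ} {c : ℝ}
    (h : sqNorm v ≤ c * sqNorm w) : l2 v ≤ Real.sqrt c * l2 w := by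
  rw [l2_eq_sqrt_sqNorm, l2_eq_sqrt_sqNorm, ← Real.sqrt_mul' c (sqNorm_nonneg w)]
  exact Real.sqrt_le_sqrt h

end Euclidean

theorem different_matrices_desynchronization_general
    (d : ℕ) (R₁ R₂ : Matrix (Fin d) (Fin d) ℝ)
    (x y : Fin d → ℝ) (αI δI δD αD : ℝ)
    (hδD : 0 ≤ δD) (hαD : 0 ≤ αD)
    (h1 : sqNorm (R₁.mulVec x) ≤ (αI + δI) * sqNorm x)
    (h2 : |ip (R₂.mulVec y) (R₁.mulVec x) - αD * ip y (R₁.mulVec x)|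
            ≤ δD * l2 (R₁.mulVec x) * l2 y)
    (h3 : |ip (R₁.mulVec x) y - αD * ip x y| ≤ δD * l2 x * l2 y) :
    |ip (R₁.mulVec x) (R₂.mulVec y) - αD ^ 2 * ip x y|
      ≤ (δD * Real.sqrt (αI + δI) + αD * δD) * (l2 x * l2 y) := by
  have hR₁x : l2 (R₁.mulVec x) ≤ Real.sqrt (αI + δI) * l2 x :=
    l2_le_sqrt_mul_l2_of_sqNorm_le h1
  rw [ip_comm y] at h2
  rw [ip_comm]
  calc |ip (R₂.mulVec y) (R₁.mulVec x) - αD ^ 2 * ip x y|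
      ≤ δD * l2 (R₁.mulVec x) * l2 y + αD * (δD * l2 x * l2 y) :=
        abs_sub_sq_mul_le_of_abs_sub_mul_le hαD h2 h3
    _ ≤ δD * (Real.sqrt (αI + δI) * l2 x) * l2 y + αD * (δD * l2 x * l2 y) := by
        gcongr
        exact l2_nonneg y
    _ = (δD * Real.sqrt (αI + δI) + αD * δD) * (l2 x * l2 y) := by ring

/-- **Deterministic core of the different-matrices desynchronization lemma.**
If `‖R₁x‖² ≤ (α_I + δ_I)‖x‖²`, `|⟨R₂y, R₁x⟩ − α_D⟨y, R₁x⟩| ≤ δ_D‖R₁x‖‖y‖`, and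
`|⟨R₁x, y⟩ − α_D⟨x, y⟩| ≤ δ_D‖x‖‖y‖`, then
`|⟨R₁x, R₂y⟩ − α_D²⟨x, y⟩| ≤ (δ_D·√(α_I + δ_I) + α_D·δ_D)·‖x‖‖y‖`. -/
theorem different_matrices_desynchronization
    (d : ℕ) (hd : 1 ≤ d) (R₁ R₂ : Matrix (Fin d) (Fin d) ℝ)
    (x y : Fin d → ℝ) (αI δI δD αD : ℝ)
    (hαI : 0 ≤ αI) (hδI : 0 ≤ δI) (hδD : 0 ≤ δD) (hαD : 0 ≤ αD)
    (h1 : sqNorm (R₁.mulVec x) ≤ (αI + δI) * sqNorm x)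
    (h2 : |ip (R₂.mulVec y) (R₁.mulVec x) - αD * ip y (R₁.mulVec x)|
            ≤ δD * l2 (R₁.mulVec x) * l2 y)
    (h3 : |ip (R₁.mulVec x) y - αD * ip x y| ≤ δD * l2 x * l2 y) :
    |ip (R₁.mulVec x) (R₂.mulVec y) - αD ^ 2 * ip x y|
      ≤ (δD * Real.sqrt (αI + δI) + αD * δD) * (l2 x * l2 y) :=
  different_matrices_desynchronization_general d R₁ R₂ x y αI δI δD αD hδD hαD h1 h2 h3
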